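/- arXiv:2109.14877 — 2 statements merged into one kernel-verified Lean document; each statement's English description precedes it below -/
import Mathlib

section
/- Let M be a countable model of a small countable complete theory T, and let B_1, B_2 ⊆ M be such that D(B_1) ⊆ D(B_2), where D(B) denotes the dowry of B. Then D(A^{B_1}) ⊆ D(A^{B_2}). -/
/-!
A tuple `ā` of `A^{B₁}` has a principal type over some tuple `b̄₁` from `B₁`, isolated by
`φ(x̄, b̄₁)`. Pick `b̄₂` in `B₂` with the type of `b̄₁`. As `B₁` and `B₂` sit elementarily in
their constructed models, the formulas `∃ x̄, φ(x̄, ȳ)` and `∀ x̄, φ(x̄, ȳ) → ψ(x̄)` pass from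
`b̄₁` in `A^{B₁}` to `b̄₂` in `A^{B₂}`, so any realization of `φ(x̄, b̄₂)` there has the type of `ā`.
-/

namespace Paper

open FirstOrder FirstOrder.Language Set

universe u v w x y

variable (L : FirstOrder.Language.{u, v})

/-- A theory is *small* if for every `n` it has only countably many complete `n`-types
over the empty set. -/
def IsSmall (T : L.Theory) : Prop := ∀ n : ℕ, Countable (T.CompleteType (Fin n))

section Basic

variable {M : Type w} [L.Structure M]

/-- `M` is ω-saturated: every set of 1-formulas over finitely many parameters that is
finitely satisfiable in `M` is realized in `M`. -/
def OmegaSaturated (M : Type w) [L.Structure M] : Prop :=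
  ∀ (k : ℕ) (c : Fin k → M) (S : Set (L.Formula (Fin k ⊕ Fin 1))),
    (∀ S₀ : Finset (L.Formula (Fin k ⊕ Fin 1)), ↑S₀ ⊆ S →
        ∃ a : M, ∀ φ ∈ S₀, Formula.Realize φ (Sum.elim c fun _ => a)) →
    ∃ a : M, ∀ φ ∈ S, Formula.Realize φ (Sum.elim c fun _ => a)

/-- The complete type of a tuple over the empty parameter set (as a set of formulas). -/
def tp0 {γ : Type*} (a : γ → M) : Set (L.Formula γ) := {φ | φ.Realize a}

/-- The complete type of a tuple `a` over the parameters `c`. -/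
def tpT {β γ : Type*} (c : β → M) (a : γ → M) : Set (L.Formula (β ⊕ γ)) :=
  {φ | φ.Realize (Sum.elim c a)}

/-- The complete 1-type of an element `a` over the parameters `c`. -/
def tp1 {β : Type*} (c : β → M) (a : M) : Set (L.Formula (β ⊕ Fin 1)) :=
  {φ | φ.Realize (Sum.elim c fun _ => a)}

/-- `tp(a/c)` is principal (isolated by a single formula). -/
def IsPrincipalT {β γ : Type*} (c : β → M) (a : γ → M) : Prop :=
  ∃ φ ∈ tpT L c a, ∀ a' : γ → M,
    Formula.Realize φ (Sum.elim c a') → tpT L c a' = tpT L c a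

/-- The 1-type `tp(a/c)` is principal. -/
def IsPrincipal1 {β : Type*} (c : β → M) (a : M) : Prop :=
  ∃ φ ∈ tp1 L c a, ∀ a' : M,
    Formula.Realize φ (Sum.elim c fun _ => a') → tp1 L c a' = tp1 L c a

/-- `g : B → N` is a partial elementary map (this is the meaning of "`B ⊆ N`" for a
subset `B` of another model). -/
def PartialElem {M : Type w} {N : Type x} [L.Structure M] [L.Structure N]
    (B : Set M) (g : B → N) : Prop :=
  ∀ (n : ℕ) (φ : L.Formula (Fin n)) (b : Fin n → B),
    Formula.Realize φ (fun i => (b i : M)) ↔ Formula.Realize φ (fun i => g (b i))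

/-- The finite diagram of `M` is contained in the finite diagram of `N`: every complete
type over `∅` realized in `M` is realized in `N`. -/
def FinDiagSubset (M : Type w) (N : Type x) [L.Structure M] [L.Structure N] : Prop :=
  ∀ (n : ℕ) (a : Fin n → M), ∃ b : Fin n → N, tp0 L a = tp0 L b

/-- The dowry of `B₁` is contained in the dowry of `B₂`. -/
def DowrySubset {M : Type w} [L.Structure M] (B₁ B₂ : Set M) : Prop :=
  ∀ (n : ℕ) (b₁ : Fin n → B₁), ∃ b₂ : Fin n → B₂,
    tp0 L (fun i => (b₁ i : M)) = tp0 L (fun i => (b₂ i : M))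

/-- `A` (together with the identification `e` of `B` with a subset of `A`) is a model
obtained by the construction of Theorem 2 over the countable set `B`: a countable model of
`T` containing `B` in which every finite tuple has a principal type over some finite tuple
from `B` extending any prescribed finite tuple from `B`. -/
def IsConstructedOver (T : L.Theory) {M : Type w} [L.Structure M] (B : Set M)
    (A : Type x) [L.Structure A] (e : B → A) : Prop :=
  Countable A ∧ T.Model A ∧ PartialElem L B e ∧
    ∀ (n : ℕ) (a : Fin n → A) (k₀ : ℕ) (b₀ : Fin k₀ → B),
      ∃ (k : ℕ) (b : Fin k → B), (∀ j, ∃ i, b i = b₀ j) ∧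
        IsPrincipalT L (fun i => e (b i)) a

/-- `N` is a homogeneous structure. -/
def IsHomogeneous (N : Type x) [L.Structure N] : Prop :=
  ∀ (n : ℕ) (a b : Fin n → N), tp0 L a = tp0 L b →
    ∀ c : N, ∃ d : N, tp0 L (Fin.snoc a c) = tp0 L (Fin.snoc b d)

/-- `p ⊥ʷ q`: weak orthogonality of the two types, witnessed inside the (sufficiently
saturated) structure `N`. -/
def WeaklyOrthogonalIn (N : Type x) [L.Structure N] {k m : ℕ}
    (p : Set (L.Formula (Fin k))) (q : Set (L.Formula (Fin m))) : Prop :=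
  ∀ (a₁ a₂ : Fin k → N) (b₁ b₂ : Fin m → N),
    tp0 L a₁ = p → tp0 L a₂ = p → tp0 L b₁ = q → tp0 L b₂ = q →
      tp0 L (Fin.append a₁ b₁) = tp0 L (Fin.append a₂ b₂)

end Basic

/-- `I(T, ℵ₀) = 2^{ℵ₀}`: the theory `T` has continuum many pairwise non-isomorphic
countable models. -/
def HasContinuumManyCountableModels (T : L.Theory) : Prop :=
  ∃ f : Set ℕ → Theory.ModelType.{u, v, max u v} T,
    (∀ s, Countable (f s)) ∧
    ∀ s t : Set ℕ, s ≠ t → IsEmpty ((f s) ≃[L] (f t))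

section Ordered

variable {M : Type w} [L.Structure M] [LinearOrder M]

/-- The set of realizations in `M` of the 1-type `tp(a₀/c)`. -/
def pSet {k : ℕ} (c : Fin k → M) (a₀ : M) : Set M := {x | tp1 L c x = tp1 L c a₀}

/-- `φ(x, y)` holds of `(x, y)` over the parameters `c`. -/
def real2 {k : ℕ} (c : Fin k → M) (φ : L.Formula (Fin k ⊕ Fin 2)) (x y : M) : Prop :=
  Formula.Realize φ (Sum.elim c ![x, y])

/-- `φ(M, α)`, the set defined by `φ(x, α)`. -/
def phiSet {k : ℕ} (c : Fin k → M) (φ : L.Formula (Fin k ⊕ Fin 2)) (α : M) : Set M :=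
  {x | real2 L c φ x α}

/-- `S` is convex in `B`. -/
def ConvexIn {M : Type w} [LinearOrder M] (S B : Set M) : Prop :=
  ∀ a ∈ S, ∀ b ∈ S, ∀ y ∈ B, a ≤ y → y ≤ b → y ∈ S

/-- `φ(x,y)` is a `p`-preserving formula, `p = tp(a₀/c)`. -/
def PPreserving {k : ℕ} (c : Fin k → M) (a₀ : M) (φ : L.Formula (Fin k ⊕ Fin 2)) : Prop :=
  ∃ α ∈ pSet L c a₀, ∃ γ₁ ∈ pSet L c a₀, ∃ γ₂ ∈ pSet L c a₀,
    (pSet L c a₀ ∩ (phiSet L c φ α \ {α})).Nonempty ∧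
    ∀ z ∈ phiSet L c φ α, γ₁ < z ∧ z < γ₂

/-- `φ(x,y)` is convex to the right on `p`. -/
def ConvexRight {k : ℕ} (c : Fin k → M) (a₀ : M) (φ : L.Formula (Fin k ⊕ Fin 2)) : Prop :=
  ∃ α ∈ pSet L c a₀,
    ConvexIn (pSet L c a₀ ∩ phiSet L c φ α) Set.univ ∧
    α ∈ phiSet L c φ α ∧ ∀ z ∈ phiSet L c φ α, α ≤ z

/-- `φ(x,y)` is convex to the left on `p`. -/
def ConvexLeft {k : ℕ} (c : Fin k → M) (a₀ : M) (φ : L.Formula (Fin k ⊕ Fin 2)) : Prop :=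
  ∃ α ∈ pSet L c a₀,
    ConvexIn (pSet L c a₀ ∩ phiSet L c φ α) Set.univ ∧
    α ∈ phiSet L c φ α ∧ ∀ z ∈ phiSet L c φ α, z ≤ α

/-- `φ(x,y)` is a quasi-successor on `p`. -/
def IsQuasiSuccessor {k : ℕ} (c : Fin k → M) (a₀ : M)
    (φ : L.Formula (Fin k ⊕ Fin 2)) : Prop :=
  PPreserving L c a₀ φ ∧ (ConvexRight L c a₀ φ ∨ ConvexLeft L c a₀ φ) ∧
    ∀ α ∈ pSet L c a₀, ∀ β ∈ phiSet L c φ α ∩ pSet L c a₀,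
      (pSet L c a₀ ∩ (phiSet L c φ β \ phiSet L c φ α)).Nonempty

/-- `CRF(p)`: the family of all `p`-preserving convex to the right `A`-formulas. -/
def CRF {k : ℕ} (c : Fin k → M) (a₀ : M) : Set (L.Formula (Fin k ⊕ Fin 2)) :=
  {φ | PPreserving L c a₀ φ ∧ ConvexRight L c a₀ φ}

/-- `CRF(p)` is infinite (up to equivalence on `p`, i.e. infinitely many traces). -/
def CRFInfinite {k : ℕ} (c : Fin k → M) (a₀ : M) : Prop :=
  {g : M → Set M | ∃ φ ∈ CRF L c a₀,
    g = fun α => phiSet L c φ α ∩ pSet L c a₀}.Infinite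

/-- `CRF(p)` has a greatest formula on `p`. -/
def HasGreatestCRF {k : ℕ} (c : Fin k → M) (a₀ : M) : Prop :=
  ∃ φ ∈ CRF L c a₀, ∀ ψ ∈ CRF L c a₀, ∀ α ∈ pSet L c a₀,
    phiSet L c ψ α ∩ pSet L c a₀ ⊆ phiSet L c φ α ∩ pSet L c a₀

/-- `CRF(p)` has a least formula on `p`. -/
def HasLeastCRF {k : ℕ} (c : Fin k → M) (a₀ : M) : Prop :=
  ∃ φ ∈ CRF L c a₀, ∀ ψ ∈ CRF L c a₀, ∀ α ∈ pSet L c a₀,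
    phiSet L c φ α ∩ pSet L c a₀ ⊆ phiSet L c ψ α ∩ pSet L c a₀

/-- `chain n x y` holds iff `x ∈ φⁿ(M, y)` (the `n`-fold iterate of `φ`). -/
def chain {k : ℕ} (c : Fin k → M) (φ : L.Formula (Fin k ⊕ Fin 2)) :
    ℕ → M → M → Prop
  | 0, x, y => x = y
  | n + 1, x, y => ∃ z, chain c φ n z y ∧ real2 L c φ x z

/-- The neighborhood `V_{p,φ}(α)`. -/
def Vnb {k : ℕ} (c : Fin k → M) (a₀ : M) (φ : L.Formula (Fin k ⊕ Fin 2)) (α : M) :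
    Set M :=
  {γ | γ ∈ pSet L c a₀ ∧ ∃ n : ℕ, chain L c φ n γ α ∨ chain L c φ n α γ}

/-- Every element of `S` precedes every element of `S'`. -/
def SetLT {M : Type w} [LinearOrder M] (S S' : Set M) : Prop :=
  ∀ a ∈ S, ∀ b ∈ S', a < b

/-- The set of elements strictly above every member of `S` and strictly below every
member of `S'`. -/
def betweenSets {M : Type w} [LinearOrder M] (S S' : Set M) : Set M :=
  {y | (∀ a ∈ S, a < y) ∧ ∀ b ∈ S', y < b}

/-- The convex closure `φᶜ(M)` of the set defined by a 1-formula `φ` over parameters `c`. -/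
def convCl {β : Type*} (c : β → M) (φ : L.Formula (β ⊕ Fin 1)) : Set M :=
  {y | ∃ y₁ y₂ : M, Formula.Realize φ (Sum.elim c fun _ => y₁) ∧
    Formula.Realize φ (Sum.elim c fun _ => y₂) ∧ y₁ ≤ y ∧ y ≤ y₂}

/-- The convex type `tpᶜ(a/c)`, encoded as the set of 1-formulas `φ` over `c` whose
convex closure contains `a`. -/
def tpc {β : Type*} (c : β → M) (a : M) : Set (L.Formula (β ⊕ Fin 1)) :=
  {φ | a ∈ convCl L c φ}

/-- The set of realizations in `M` of the convex type `tpᶜ(a/c)`. -/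
def tpcRealizers {β : Type*} (c : β → M) (a : M) : Set M :=
  {y | ∀ φ ∈ tp1 L c a, y ∈ convCl L c φ}

/-- `(α, β)` realizes the partial type `q₀(x, y)` associated with the quasi-successor `φ`. -/
def RealizesQ0 {k : ℕ} (c : Fin k → M) (a₀ : M) (φ : L.Formula (Fin k ⊕ Fin 2))
    (α β : M) : Prop :=
  α < β ∧ α ∈ pSet L c a₀ ∧ β ∈ pSet L c a₀ ∧
  (∀ n : ℕ, ¬ chain L c φ n β α) ∧
  (∀ R : L.Formula (Fin k ⊕ Fin 2),
    (PPreserving L c a₀ R ∧ ConvexRight L c a₀ R ∧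
      ∀ n : ℕ, ∀ α' ∈ pSet L c a₀, ∀ γ ∈ pSet L c a₀,
        chain L c φ n γ α' → γ ∈ phiSet L c R α') →
    real2 L c R β α) ∧
  (∀ Lf : L.Formula (Fin k ⊕ Fin 2),
    (PPreserving L c a₀ Lf ∧ ConvexLeft L c a₀ Lf ∧
      ∀ n : ℕ, ∀ β' ∈ pSet L c a₀, ∀ γ ∈ pSet L c a₀,
        chain L c φ n β' γ → γ ∈ phiSet L c Lf β') →
    real2 L c Lf α β)

/-- The neighborhood `V_{p(M)}(α)` built from all of `CRF(p)`. -/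
def VCRF {k : ℕ} (c : Fin k → M) (a₀ : M) (α : M) : Set M :=
  {γ | γ ∈ pSet L c a₀ ∧ ∃ φ ∈ CRF L c a₀, real2 L c φ α γ ∨ real2 L c φ γ α}

/-- `ε_{φ,Θ}(M, α) = (φ(α,·) ∨ φ(·,α)) ∩ Θ(M)`. -/
def epsSet {k : ℕ} (c : Fin k → M) (θ : L.Formula (Fin k ⊕ Fin 1))
    (φ : L.Formula (Fin k ⊕ Fin 2)) (α : M) : Set M :=
  {y | (real2 L c φ α y ∨ real2 L c φ y α) ∧
    Formula.Realize θ (Sum.elim c fun _ => y)}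

/-- `Θ ∈ p` is a formula with `p(M) = pᶜ(M) ∩ Θ(M)`. -/
def ThetaWitness {k : ℕ} (c : Fin k → M) (a₀ : M) (θ : L.Formula (Fin k ⊕ Fin 1)) :
    Prop :=
  pSet L c a₀ =
    tpcRealizers L c a₀ ∩ {y | Formula.Realize θ (Sum.elim c fun _ => y)}

/-- The kernel `Ker_{p(M)}(α) = ⋂_{φ ∈ CRF(p)} ε_{φ,Θ}(M, α)`. -/
def KerSet {k : ℕ} (c : Fin k → M) (a₀ : M) (θ : L.Formula (Fin k ⊕ Fin 1)) (α : M) :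
    Set M :=
  ⋂ φ ∈ CRF L c a₀, epsSet L c θ φ α

/-- The formulas of `CRF(p)` strictly smaller than `ψ` on `p`. -/
def SmallerCRF {k : ℕ} (c : Fin k → M) (a₀ : M) (ψ : L.Formula (Fin k ⊕ Fin 2)) :
    Set (L.Formula (Fin k ⊕ Fin 2)) :=
  {φ ∈ CRF L c a₀ | ∃ α ∈ pSet L c a₀,
    phiSet L c φ α ∩ pSet L c a₀ ⊂ phiSet L c ψ α ∩ pSet L c a₀}

/-- The formulas of `CRF(p)` strictly greater than `ψ` on `p`. -/
def LargerCRF {k : ℕ} (c : Fin k → M) (a₀ : M) (ψ : L.Formula (Fin k ⊕ Fin 2)) :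
    Set (L.Formula (Fin k ⊕ Fin 2)) :=
  {φ ∈ CRF L c a₀ | ∃ α ∈ pSet L c a₀,
    phiSet L c ψ α ∩ pSet L c a₀ ⊂ phiSet L c φ α ∩ pSet L c a₀}

/-- `V^ψ_{p(M)}(α)`. -/
def Vpsi {k : ℕ} (c : Fin k → M) (a₀ : M) (θ : L.Formula (Fin k ⊕ Fin 1))
    (ψ : L.Formula (Fin k ⊕ Fin 2)) (α : M) : Set M :=
  ⋃ φ ∈ SmallerCRF L c a₀ ψ, epsSet L c θ φ α

/-- `Ker^ψ_{p(M)}(α)`. -/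
def Kerpsi {k : ℕ} (c : Fin k → M) (a₀ : M) (θ : L.Formula (Fin k ⊕ Fin 1))
    (ψ : L.Formula (Fin k ⊕ Fin 2)) (α : M) : Set M :=
  ⋂ φ ∈ LargerCRF L c a₀ ψ, epsSet L c θ φ α

/-- `φ(x,y)` is equivalence-generating (for convex-to-the-right formulas). -/
def EquivGenR {k : ℕ} (c : Fin k → M) (a₀ : M) (φ : L.Formula (Fin k ⊕ Fin 2)) : Prop :=
  ∀ α ∈ pSet L c a₀, ∀ β ∈ phiSet L c φ α ∩ pSet L c a₀,
    ∀ y : M, β ≤ y → (y ∈ phiSet L c φ α ↔ y ∈ phiSet L c φ β)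

/-- `φ(x,y)` is equivalence-generating (for convex-to-the-left formulas). -/
def EquivGenL {k : ℕ} (c : Fin k → M) (a₀ : M) (φ : L.Formula (Fin k ⊕ Fin 2)) : Prop :=
  ∀ α ∈ pSet L c a₀, ∀ β ∈ phiSet L c φ α ∩ pSet L c a₀,
    ∀ y : M, y ≤ β → (y ∈ phiSet L c φ α ↔ y ∈ phiSet L c φ β)

/-- The relation defined by the formula `E(x, y, b̄)` over parameters `c`. -/
def Erel {k m : ℕ} (c : Fin k → M) (E : L.Formula (Fin k ⊕ (Fin 2 ⊕ Fin m)))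
    (b : Fin m → M) (x y : M) : Prop :=
  Formula.Realize E (Sum.elim c (Sum.elim ![x, y] b))

/-- `r` is an equivalence relation on `P`. -/
def IsEquivOn {M : Type w} (r : M → M → Prop) (P : Set M) : Prop :=
  (∀ x ∈ P, r x x) ∧ (∀ x ∈ P, ∀ y ∈ P, r x y → r y x) ∧
    (∀ x ∈ P, ∀ y ∈ P, ∀ z ∈ P, r x y → r y z → r x z)

/-- The `r`-classes are convex in `P`. -/
def ClassesConvexIn {M : Type w} [LinearOrder M] (r : M → M → Prop) (P : Set M) : Prop :=
  ∀ x ∈ P, ConvexIn {y | y ∈ P ∧ r x y} P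

/-- The `r`-classes are mutually dense in `P`. -/
def ClassesMutuallyDense {M : Type w} [LinearOrder M] (r : M → M → Prop) (P : Set M) :
    Prop :=
  ∀ x ∈ P, ∀ y ∈ P, ¬ r x y →
    ∀ u ∈ P, ∀ v ∈ P, r x u → r x v → u < v → ∃ w ∈ P, r y w ∧ u < w ∧ w < v

/-- Every `r`-class is partitioned into infinitely many infinite `r'`-classes. -/
def RefinedIntoInfinitelyMany {M : Type w} (r r' : M → M → Prop) (P : Set M) : Prop :=
  (∀ x ∈ P, ∀ y ∈ P, r' x y → r x y) ∧
  (∀ x ∈ P, ∀ y ∈ P, r x y → {z | z ∈ P ∧ r' y z}.Infinite) ∧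
  ∀ x ∈ P, {C : Set M | ∃ y, y ∈ P ∧ r x y ∧ C = {z | z ∈ P ∧ r' y z}}.Infinite

/-- The Restriction on the (linearly ordered) theory of `M`. -/
def SatisfiesRestriction (M : Type w) [L.Structure M] [LinearOrder M] : Prop :=
  ∀ (k : ℕ) (c : Fin k → M) (a₀ : M),
    (∀ (m : ℕ) (E : L.Formula (Fin k ⊕ (Fin 2 ⊕ Fin m))) (bs : ℕ → Fin m → M),
        ¬ ∀ i : ℕ,
            IsEquivOn (Erel L c E (bs i)) (pSet L c a₀) ∧
            ClassesConvexIn (Erel L c E (bs i)) (pSet L c a₀) ∧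
            ClassesMutuallyDense (Erel L c E (bs i)) (pSet L c a₀) ∧
            RefinedIntoInfinitelyMany (Erel L c E (bs i)) (Erel L c E (bs (i + 1)))
              (pSet L c a₀)) ∧
    {q : Set (L.Formula (Fin k ⊕ Fin 1)) | ∃ y : M,
      tpc L c y = tpc L c a₀ ∧ q = tp1 L c y}.Finite ∧
    ∀ φ : L.Formula (Fin k ⊕ Fin 2),
      (PPreserving L c a₀ φ → ConvexRight L c a₀ φ → EquivGenR L c a₀ φ) ∧
      (PPreserving L c a₀ φ → ConvexLeft L c a₀ φ → EquivGenL L c a₀ φ)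

/-- `M₀` is a prime model (of the complete theory of `M`) over the finite tuple `xs`:
it is a countable atomic elementary substructure of `M` containing `xs`. -/
def IsPrimeOver (M₀ : L.ElementarySubstructure M) {r : ℕ} (xs : Fin r → M) : Prop :=
  (∀ i, xs i ∈ M₀) ∧ Countable M₀ ∧
    ∀ (n : ℕ) (a : Fin n → M₀), IsPrincipalT L xs (fun i => (a i : M))

/-- The 1-type `p = tp(a₀/c)` is extremely trivial. -/
def ExtremelyTrivial {k : ℕ} (c : Fin k → M) (a₀ : M) : Prop :=
  ∀ n : ℕ, 1 ≤ n → ∀ βs : Fin n → M, (∀ i, βs i ∈ pSet L c a₀) →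
    ∀ M₀ : L.ElementarySubstructure M, IsPrimeOver L M₀ (Fin.append c βs) →
      {y | y ∈ pSet L c a₀ ∧ y ∈ M₀} = Set.range βs

end Ordered

section TypeTransfer

variable {L} {N₁ : Type x} {N₂ : Type y} [L.Structure N₁] [L.Structure N₂]

theorem tp0_eq_of_subset {γ : Type*} {a : γ → N₁} {b : γ → N₂}
    (h : tp0 L a ⊆ tp0 L b) : tp0 L a = tp0 L b := by
  refine h.antisymm fun φ hφb => by_contra fun hφa => ?_
  have hnot : φ.not ∈ tp0 L a := Formula.realize_not.mpr hφa
  exact Formula.realize_not.mp (h hnot) hφb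

theorem tp0_eq_of_tpT_eq {β γ : Type*} {c₁ : β → N₁} {c₂ : β → N₂} {a₁ : γ → N₁}
    {a₂ : γ → N₂} (h : tpT L c₁ a₁ = tpT L c₂ a₂) : tp0 L a₁ = tp0 L a₂ := by
  ext ψ
  have hψ := Set.ext_iff.mp h (ψ.relabel Sum.inr)
  simp only [tpT, Set.mem_ofPred_eq, Formula.realize_relabel, Sum.elim_comp_inr] at hψ
  exact hψ

theorem PartialElem.tp0_comp {M : Type w} [L.Structure M] {B : Set M} {e : B → N₁}
    (he : PartialElem L B e) {n : ℕ} (b : Fin n → B) :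
    tp0 L (fun i => e (b i)) = tp0 L (fun i => (b i : M)) :=
  Set.ext fun φ => (he n φ b).symm

theorem exists_realize_of_tp0_eq {β γ : Type*} [Finite γ] {c₁ : β → N₁} {c₂ : β → N₂}
    (hc : tp0 L c₁ = tp0 L c₂) {φ : L.Formula (β ⊕ γ)} {a : γ → N₁}
    (ha : φ.Realize (Sum.elim c₁ a)) : ∃ a' : γ → N₂, φ.Realize (Sum.elim c₂ a') := by
  have hex : φ.iExs γ ∈ tp0 L c₁ := Formula.realize_iExs.mpr ⟨a, ha⟩
  rw [hc] at hex
  exact Formula.realize_iExs.mp hex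

theorem IsPrincipalT.exists_tpT_eq {β γ : Type*} [Finite γ] {c₁ : β → N₁} {c₂ : β → N₂}
    {a : γ → N₁} (hprin : IsPrincipalT L c₁ a) (hc : tp0 L c₁ = tp0 L c₂) :
    ∃ a' : γ → N₂, tpT L c₁ a = tpT L c₂ a' := by
  obtain ⟨φ, hφa, hiso⟩ := hprin
  obtain ⟨a', hφa'⟩ := exists_realize_of_tp0_eq hc hφa
  refine ⟨a', tp0_eq_of_subset fun ψ hψ => ?_⟩
  have himp : (φ.imp ψ).iAlls γ ∈ tp0 L c₁ :=
    Formula.realize_iAlls.mpr fun x hφx =>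
      show ψ ∈ tpT L c₁ x from (hiso x hφx).symm ▸ hψ
  rw [hc] at himp
  exact Formula.realize_iAlls.mp himp a' hφa'

end TypeTransfer

theorem statement_3_general {L : FirstOrder.Language.{u, v}}
    {M : Type w} [L.Structure M]
    (B₁ B₂ : Set M) (h12 : DowrySubset L B₁ B₂)
    (A₁ : Type x) [L.Structure A₁] (e₁ : B₁ → A₁)
    (A₂ : Type y) [L.Structure A₂] (e₂ : B₂ → A₂)
    (h₁ : IsConstructedOver L (L.completeTheory M) B₁ A₁ e₁)
    (h₂ : IsConstructedOver L (L.completeTheory M) B₂ A₂ e₂) :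
    FinDiagSubset L A₁ A₂ := by
  intro n a
  obtain ⟨-, -, he₁, hconstr₁⟩ := h₁
  obtain ⟨-, -, he₂, -⟩ := h₂
  obtain ⟨k, b₁, -, hprin⟩ := hconstr₁ n a 0 Fin.elim0
  obtain ⟨b₂, hb⟩ := h12 k b₁
  have hc : tp0 L (fun i => e₁ (b₁ i)) = tp0 L (fun i => e₂ (b₂ i)) := by
    rw [he₁.tp0_comp, he₂.tp0_comp, hb]
  obtain ⟨a₂, ha⟩ := hprin.exists_tpT_eq hc
  exact ⟨a₂, tp0_eq_of_tpT_eq ha⟩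

/-- Corollary 1, part 2. If the dowry of `B₁` is contained in the dowry
of `B₂`, then the finite diagram of the constructed model `A^{B₁}` is contained in that
of `A^{B₂}`. -/
theorem statement_3 {L : FirstOrder.Language.{u, v}} (hL : Countable L.Symbols)
    {M : Type w} [L.Structure M] [Nonempty M] (hMc : Countable M)
    (hsmall : IsSmall L (L.completeTheory M))
    (B₁ B₂ : Set M) (h12 : DowrySubset L B₁ B₂)
    (A₁ : Type x) [L.Structure A₁] (e₁ : B₁ → A₁)
    (A₂ : Type y) [L.Structure A₂] (e₂ : B₂ → A₂)
    (h₁ : IsConstructedOver L (L.completeTheory M) B₁ A₁ e₁)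
    (h₂ : IsConstructedOver L (L.completeTheory M) B₂ A₂ e₂) :
    FinDiagSubset L A₁ A₂ :=
  statement_3_general B₁ B₂ h12 A₁ e₁ A₂ e₂ h₁ h₂

end Paper
end

section
/- Let T be a small countable complete theory, M ⊨ T, B ⊆ M countable, and suppose there are tuples ā_1, ā_2 and an element c in B such that tp(ā_1) = tp(ā_2) and tp(c ā_1) ≠ tp(d ā_2) for every d ∈ M. Then the model A^B is non-homogeneous. -/
namespace Paper

open FirstOrder FirstOrder.Language Set

universe u v w x y

variable (L : FirstOrder.Language.{u, v})

section Transfer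

variable {L} {M : Type w} {N : Type x} [L.Structure M] [L.Structure N]

theorem tp0_comp_eq {α β : Type*} {v : α → M} {w : α → N} (h : tp0 L v = tp0 L w)
    (f : β → α) : tp0 L (v ∘ f) = tp0 L (w ∘ f) := by
  ext φ
  simpa only [tp0, Set.mem_ofPred_eq, Formula.realize_relabel] using
    Set.ext_iff.mp h (φ.relabel f)

theorem tp0_eq_of_subset_s4 {α : Type*} {v : α → M} {w : α → N} (h : tp0 L v ⊆ tp0 L w) :
    tp0 L v = tp0 L w := by
  refine h.antisymm fun φ hφw => ?_
  by_contra hφv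
  exact Formula.realize_not.mp (h (Formula.realize_not.mpr hφv)) hφw

theorem PartialElem.tp0_comp_eq {B : Set M} {g : B → N} (hg : PartialElem L B g) {n : ℕ}
    (b : Fin n → B) : tp0 L (Subtype.val ∘ b) = tp0 L (g ∘ b) :=
  Set.ext fun φ => hg n φ b

/-- The isolating formula `φ(b, x)` and, for each `ψ` in the type, the sentence
`∀ x, φ(b, x) → ψ(b, x)` are formulas over `b`, so they transfer along `g`. -/
theorem PartialElem.exists_tpT_eq_of_isPrincipalT {B : Set M} {g : B → N}
    (hg : PartialElem L B g) {k : ℕ} {γ : Type*} [Finite γ] (b : Fin k → B) (a : γ → N)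
    (ha : IsPrincipalT L (g ∘ b) a) :
    ∃ a' : γ → M, tpT L (Subtype.val ∘ b) a' = tpT L (g ∘ b) a := by
  obtain ⟨φ, hφa, hφ⟩ := ha
  have hexists : (φ.iExs γ).Realize (Subtype.val ∘ b) :=
    (hg k _ b).mpr (Formula.realize_iExs.mpr ⟨a, hφa⟩)
  obtain ⟨a', hφa'⟩ := Formula.realize_iExs.mp hexists
  refine ⟨a', (tp0_eq_of_subset_s4 fun ψ hψ => ?_).symm⟩
  have himp : ((φ.imp ψ).iAlls γ).Realize (g ∘ b) := by
    refine Formula.realize_iAlls.mpr fun a'' hφa'' => ?_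
    have htp : tpT L (g ∘ b) a'' = tpT L (g ∘ b) a := hφ a'' hφa''
    exact (htp ▸ hψ : ψ ∈ tpT L (g ∘ b) a'')
  exact Formula.realize_iAlls.mp ((hg k _ b).mpr himp) a' hφa'

end Transfer

theorem statement_4_general {L : FirstOrder.Language.{u, v}}
    {M : Type w} [L.Structure M]
    (B : Set M)
    {n : ℕ} (a₁ a₂ : Fin n → M) (ha₁ : ∀ i, a₁ i ∈ B) (ha₂ : ∀ i, a₂ i ∈ B)
    (c : M) (hc : c ∈ B)
    (heq : tp0 L a₁ = tp0 L a₂)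
    (hneq : ∀ d : M, tp0 L (Fin.snoc a₁ c) ≠ tp0 L (Fin.snoc a₂ d))
    (A : Type x) [L.Structure A] (e : B → A)
    (hA : IsConstructedOver L (L.completeTheory M) B A e) :
    ¬ IsHomogeneous L A := by
  intro hhom
  obtain ⟨-, -, hpe, hconstr⟩ := hA
  let b₁ : Fin n → B := fun i => ⟨a₁ i, ha₁ i⟩
  let b₂ : Fin n → B := fun i => ⟨a₂ i, ha₂ i⟩
  have htp : tp0 L (e ∘ b₁) = tp0 L (e ∘ b₂) :=
    (hpe.tp0_comp_eq b₁).symm.trans (heq.trans (hpe.tp0_comp_eq b₂))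
  obtain ⟨d, hd⟩ := hhom n _ _ htp (e ⟨c, hc⟩)
  obtain ⟨k, b, hext, hprin⟩ := hconstr 1 (fun _ => d) n b₂
  choose ι hι using hext
  obtain ⟨x, hx⟩ := hpe.exists_tpT_eq_of_isPrincipalT b _ hprin
  have hd' : tp0 L (Fin.snoc (Subtype.val ∘ b₂) (x 0)) = tp0 L (Fin.snoc (e ∘ b₂) d) := by
    have h := tp0_comp_eq hx (Fin.snoc (Sum.inl ∘ ι) (Sum.inr 0))
    have hbι : b ∘ ι = b₂ := funext hι
    simp only [Fin.comp_snoc, ← Function.comp_assoc, Sum.elim_comp_inl, Sum.elim_inr] at h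
    rwa [Function.comp_assoc, hbι, Function.comp_assoc, hbι] at h
  apply hneq (x 0)
  calc tp0 L (Fin.snoc a₁ c) = tp0 L (Fin.snoc (e ∘ b₁) (e ⟨c, hc⟩)) := by
        have h := hpe.tp0_comp_eq (Fin.snoc b₁ ⟨c, hc⟩)
        rwa [Fin.comp_snoc, Fin.comp_snoc] at h
    _ = tp0 L (Fin.snoc (e ∘ b₂) d) := hd
    _ = tp0 L (Fin.snoc a₂ (x 0)) := hd'.symm

/-- Corollary 2. If `B` contains tuples `ā₁, ā₂` with the same type and
an element `c` such that no `d ∈ M` satisfies `tp(c ā₁) = tp(d ā₂)`, then the constructed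
model `A^B` is non-homogeneous. -/
theorem statement_4 {L : FirstOrder.Language.{u, v}} (hL : Countable L.Symbols)
    {M : Type w} [L.Structure M] [Nonempty M]
    (hsmall : IsSmall L (L.completeTheory M))
    (B : Set M) (hB : B.Countable)
    {n : ℕ} (a₁ a₂ : Fin n → M) (ha₁ : ∀ i, a₁ i ∈ B) (ha₂ : ∀ i, a₂ i ∈ B)
    (c : M) (hc : c ∈ B)
    (heq : tp0 L a₁ = tp0 L a₂)
    (hneq : ∀ d : M, tp0 L (Fin.snoc a₁ c) ≠ tp0 L (Fin.snoc a₂ d))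
    (A : Type x) [L.Structure A] (e : B → A)
    (hA : IsConstructedOver L (L.completeTheory M) B A e) :
    ¬ IsHomogeneous L A :=
  statement_4_general B a₁ a₂ ha₁ ha₂ c hc heq hneq A e hA

end Paper
end
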